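/- arXiv:1508.06590 — 2 statements merged into one kernel-verified Lean document; each statement's English description precedes it below -/
import Mathlib

section
/- Let ∅ ≠ Θ ⊆ Λ with Λ a finite subset of ℤ². If Λ^c is connected, Θ is ⋆-connected, and Θ̄⋆ ∩ ∂̲Λ ≠ ∅, then Λ^c ∪ Θ̄⋆ is connected. -/
/-!
In the plane the `⋆`-closure of a `⋆`-connected set `Θ` is connected: a `⋆`-step from `x ∈ Θ`
to `x + (a, b)` is replaced by the two unit steps through `x + (a, 0)`, which also lies in the
`⋆`-closure, and every site of the closure is one `⋆`-step away from `Θ`. A site of the closure on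
the inner boundary of `Λ` is adjacent to a site of `Λᶜ`, and two connected sets containing an
adjacent pair have connected union.
-/

open scoped Classical
open Filter MeasureTheory

namespace Paper

abbrev Site (d : ℕ) := Fin d → ℤ

/-- The `i`-th canonical basis vector in `ℤ^d`. -/
def ee (d : ℕ) (i : Fin d) : Site d := fun j => if j = i then 1 else 0

section General

variable {d : ℕ} {A : Type} [Fintype A] [DecidableEq A]

/-- A configuration `ω` is feasible on a set `Λ` for the constraints `E`. -/
def FeasibleOn (E : Fin d → Set (A × A)) (Λ : Set (Site d)) (ω : Site d → A) : Prop :=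
  ∀ x ∈ Λ, ∀ i : Fin d, x + ee d i ∈ Λ → (ω x, ω (x + ee d i)) ∉ E i

/-- The nearest-neighbour SFT `Ω(ℰ)`. -/
def Omega (E : Fin d → Set (A × A)) : Set (Site d → A) := {ω | FeasibleOn E Set.univ ω}

/-- The energy of a configuration on a finite set `Λ`. -/
noncomputable def energy (Φ₀ : A → ℝ) (Φ₁ : Fin d → A → A → ℝ)
    (Λ : Finset (Site d)) (ω : Site d → A) : ℝ :=
  (∑ x ∈ Λ, Φ₀ (ω x)) +
    ∑ i : Fin d, ∑ x ∈ Λ.filter (fun x => x + ee d i ∈ Λ), Φ₁ i (ω x) (ω (x + ee d i))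

/-- Feasibility of a configuration on a finite set, intrinsic version. -/
def FeasibleC (E : Fin d → Set (A × A)) (Λ : Finset (Site d))
    (θ : {x // x ∈ Λ} → A) : Prop :=
  ∀ (x : {x // x ∈ Λ}) (i : Fin d) (h : (x : Site d) + ee d i ∈ Λ),
    (θ x, θ ⟨(x : Site d) + ee d i, h⟩) ∉ E i

/-- Energy of a configuration on a finite set, intrinsic version. -/
noncomputable def energyC (Φ₀ : A → ℝ) (Φ₁ : Fin d → A → A → ℝ)
    (Λ : Finset (Site d)) (θ : {x // x ∈ Λ} → A) : ℝ :=
  (∑ x : {x // x ∈ Λ}, Φ₀ (θ x)) +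
    ∑ i : Fin d, ∑ x : {x // x ∈ Λ},
      if h : (x : Site d) + ee d i ∈ Λ then Φ₁ i (θ x) (θ ⟨(x : Site d) + ee d i, h⟩) else 0

/-- The partition function `Z^Φ_Λ`, summing over feasible (locally admissible) configurations. -/
noncomputable def Zpart (E : Fin d → Set (A × A)) (Φ₀ : A → ℝ) (Φ₁ : Fin d → A → A → ℝ)
    (Λ : Finset (Site d)) : ℝ :=
  ∑ θ : {x // x ∈ Λ} → A,
    if FeasibleC E Λ θ then Real.exp (-energyC Φ₀ Φ₁ Λ θ) else 0

/-- The closure `Λ ∪ ∂Λ` of a finite set. -/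
def closureF (Λ : Finset (Site d)) : Finset (Site d) :=
  Λ ∪ Finset.univ.biUnion fun i : Fin d => Λ.image (· + ee d i) ∪ Λ.image (· - ee d i)

/-- The (outer) boundary `∂Λ`. -/
def bdry (Λ : Finset (Site d)) : Finset (Site d) := closureF Λ \ Λ

/-- Combine a configuration `θ` on `Λ` with a configuration `ω` off `Λ`. -/
def patch (Λ : Finset (Site d)) (θ : {x // x ∈ Λ} → A) (ω : Site d → A) : Site d → A :=
  fun x => if h : x ∈ Λ then θ ⟨x, h⟩ else ω x

/-- The Gibbsian weight of a configuration `θ` on `Λ` with boundary condition `ω(∂Λ)`. -/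
noncomputable def bWeight (E : Fin d → Set (A × A)) (Φ₀ : A → ℝ) (Φ₁ : Fin d → A → A → ℝ)
    (Λ : Finset (Site d)) (ω : Site d → A) (θ : {x // x ∈ Λ} → A) : ℝ :=
  if FeasibleOn E (↑(closureF Λ)) (patch Λ θ ω) then
    Real.exp (-energy Φ₀ Φ₁ (closureF Λ) (patch Λ θ ω)) else 0

/-- The probability assigned by the specification `π^{ω(∂Λ)}_Λ` to an event `Ev`. -/
noncomputable def piProb (E : Fin d → Set (A × A)) (Φ₀ : A → ℝ) (Φ₁ : Fin d → A → A → ℝ)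
    (Λ : Finset (Site d)) (ω : Site d → A) (Ev : (Site d → A) → Prop) : ℝ :=
  (∑ θ : {x // x ∈ Λ} → A, if Ev (patch Λ θ ω) then bWeight E Φ₀ Φ₁ Λ ω θ else 0) /
    ∑ θ : {x // x ∈ Λ} → A, bWeight E Φ₀ Φ₁ Λ ω θ

/-- Lexicographic (strict) order on `ℤ^d`. -/
def lexLt (x y : Site d) : Prop := ∃ i, (∀ j, j < i → x j = y j) ∧ x i < y i

/-- The block `B_n = [-n,n]^d ∩ ℤ^d`. -/
noncomputable def boxF (d n : ℕ) : Finset (Site d) := Finset.Icc (fun _ => -(n : ℤ)) fun _ => (n : ℤ)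

/-- `S_n = B_n \ 𝒫`, where `𝒫` is the lexicographic past. -/
noncomputable def SF (d n : ℕ) : Finset (Site d) := (boxF d n).filter fun x => ¬lexLt x 0

/-- `S_{y,z} = {x ≽ 0 : -y ≤ x ≤ z}`. -/
noncomputable def SyzF {d : ℕ} (y z : Site d) : Finset (Site d) :=
  (Finset.Icc (-y) z).filter fun x => ¬lexLt x 0

/-- `π_Λ(ω) = π^{ω(∂Λ)}_Λ(θ(0) = ω(0))`. -/
noncomputable def piAt (E : Fin d → Set (A × A)) (Φ₀ : A → ℝ) (Φ₁ : Fin d → A → A → ℝ)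
    (Λ : Finset (Site d)) (ω : Site d → A) : ℝ :=
  piProb E Φ₀ Φ₁ Λ ω fun σ => σ 0 = ω 0

/-- `π_n(ω)`. -/
noncomputable def piN (E : Fin d → Set (A × A)) (Φ₀ : A → ℝ) (Φ₁ : Fin d → A → A → ℝ)
    (n : ℕ) (ω : Site d → A) : ℝ :=
  piAt E Φ₀ Φ₁ (SF d n) ω

/-- `π_{y,z}(ω)`. -/
noncomputable def piYZ (E : Fin d → Set (A × A)) (Φ₀ : A → ℝ) (Φ₁ : Fin d → A → A → ℝ)
    (y z : Site d) (ω : Site d → A) : ℝ :=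
  piAt E Φ₀ Φ₁ (SyzF y z) ω

/-- `A_Φ(ω) = -Φ(ω(0)) - Σ_i Φ(ω({0,e_i}))`. -/
noncomputable def AΦ (Φ₀ : A → ℝ) (Φ₁ : Fin d → A → A → ℝ) (ω : Site d → A) : ℝ :=
  -Φ₀ (ω 0) - ∑ i, Φ₁ i (ω 0) (ω (ee d i))

/-- `θ`, given on the set `Λ`, extends to a point of `Ω(ℰ)` (global admissibility). -/
def extendsOmega (E : Fin d → Set (A × A)) (Λ : Set (Site d)) (θ : Site d → A) : Prop :=
  ∃ ω ∈ Omega E, ∀ x ∈ Λ, ω x = θ x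

/-- The square block D-condition. -/
def SquareBlockD (E : Fin d → Set (A × A)) : Prop :=
  ∃ r : ℕ → ℕ, Tendsto (fun n => (r n : ℝ) / (n : ℝ)) atTop (nhds 0) ∧
    ∀ (n : ℕ) (Λ : Finset (Site d)), (∀ x ∈ Λ, x ∉ boxF d (n + r n)) →
      ∀ θ τ : Site d → A, extendsOmega E ↑(boxF d n) θ → extendsOmega E ↑Λ τ →
        ∃ ω ∈ Omega E, (∀ x ∈ boxF d n, ω x = θ x) ∧ ∀ x ∈ Λ, ω x = τ x

/-- `c_π(ν) = inf {π_Λ(ω) : 0 ∈ Λ finite, ω ∈ supp(ν)}` (with `S = supp(ν)`). -/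
noncomputable def cpi (E : Fin d → Set (A × A)) (Φ₀ : A → ℝ) (Φ₁ : Fin d → A → A → ℝ)
    (S : Set (Site d → A)) : ℝ :=
  sInf {r | ∃ Λ : Finset (Site d), (0 : Site d) ∈ Λ ∧ ∃ ω ∈ S, r = piAt E Φ₀ Φ₁ Λ ω}

/-- The shift action. -/
def shift (t : Site d) (ω : Site d → A) : Site d → A := fun x => ω (x + t)

/-- The cylinder set of configurations agreeing with `θ` on `Λ`. -/
def cylinder (Λ : Finset (Site d)) (θ : Site d → A) : Set (Site d → A) :=
  {σ | ∀ x ∈ Λ, σ x = θ x}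

/-- The support of a measure, following the paper's definition. -/
def measSupport [MeasurableSpace A] (ν : Measure (Site d → A)) : Set (Site d → A) :=
  {ω | ∀ Λ : Finset (Site d), 0 < ν (cylinder Λ ω)}

/-- Shift-invariance (stationarity) of a measure. -/
def ShiftInvariant [MeasurableSpace A] (ν : Measure (Site d → A)) : Prop :=
  ∀ t : Site d, Measure.map (shift t) ν = ν

/-- `ℓ¹` distance on `ℤ^d`. -/
noncomputable def dist1 (x y : Site d) : ℝ := ∑ i, ((x i - y i).natAbs : ℝ)

/-- `ℓ¹` distance between two finite sets. -/
noncomputable def setDist (Θ Sg : Finset (Site d)) : ℝ :=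
  sInf {r | ∃ x ∈ Θ, ∃ y ∈ Sg, r = dist1 x y}

/-- Nearest-neighbour adjacency on `ℤ^d`. -/
def adj (x y : Site d) : Prop := (∑ i, (x i - y i).natAbs) = 1

/-- `⋆`-adjacency on `ℤ^d` (`0 < ‖x-y‖_∞ ≤ 1`). -/
def starAdj (x y : Site d) : Prop := x ≠ y ∧ ∀ i, (x i - y i).natAbs ≤ 1

/-- Connectedness of a subset of `ℤ^d` with respect to adjacency. -/
def ConnectedSet (S : Set (Site d)) : Prop :=
  ∀ x ∈ S, ∀ y ∈ S, Relation.ReflTransGen (fun u v => u ∈ S ∧ v ∈ S ∧ adj u v) x y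

/-- Connectedness with respect to `⋆`-adjacency. -/
def StarConnectedSet (S : Set (Site d)) : Prop :=
  ∀ x ∈ S, ∀ y ∈ S, Relation.ReflTransGen (fun u v => u ∈ S ∧ v ∈ S ∧ starAdj u v) x y

/-- `⋆`-closure of a finite set. -/
noncomputable def starClosureF (Θ : Finset (Site d)) : Finset (Site d) :=
  Θ ∪ Θ.biUnion fun x => ((Finset.Icc (fun _ => (-1 : ℤ)) fun _ => (1 : ℤ)).erase 0).image (x + ·)

/-- `⋆`-boundary of a finite set. -/
noncomputable def starBdryF (Θ : Finset (Site d)) : Finset (Site d) := starClosureF Θ \ Θ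

/-- Inner boundary of a finite set. -/
noncomputable def innerBdry (Λ : Finset (Site d)) : Finset (Site d) :=
  Λ.filter fun x => ∃ y, adj x y ∧ y ∉ Λ

end General

section Percolation

/-- The open cluster of `x` in a site configuration `σ` on `ℤ^d`. -/
def openCluster {d : ℕ} (σ : Site d → Bool) (x : Site d) : Set (Site d) :=
  {y | Relation.ReflTransGen (fun u v => adj u v ∧ σ u = true ∧ σ v = true) x y}

/-- There is an infinite connected component of `1`'s. -/
def HasInfiniteCluster {d : ℕ} (σ : Site d → Bool) : Prop :=
  ∃ x, σ x = true ∧ (openCluster σ x).Infinite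

/-- `μ` is the i.i.d. Bernoulli(`p`) site percolation measure on `{0,1}^{ℤ^d}`. -/
def IsBernoulliProduct {d : ℕ} (p : ℝ) (μ : Measure (Site d → Bool)) : Prop :=
  IsProbabilityMeasure μ ∧
    ∀ (Λ : Finset (Site d)) (η : Site d → Bool),
      (μ (cylinder Λ η)).toReal = ∏ x ∈ Λ, if η x then p else 1 - p

/-- The critical probability of Bernoulli site percolation on `ℤ²`. -/
noncomputable def pc : ℝ :=
  sSup {p : ℝ | 0 ≤ p ∧ p ≤ 1 ∧
    ∀ μ : Measure (Site 2 → Bool), IsBernoulliProduct p μ →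
      μ {σ | HasInfiniteCluster σ} = 0}

end Percolation

section SiteRC

variable {d : ℕ}

/-- The cluster of `x` among the `1`'s of `η` inside `Λ`. -/
def clusterIn (Λ : Finset (Site d)) (η : Site d → Bool) (x : Site d) : Set (Site d) :=
  {y | Relation.ReflTransGen
    (fun u v => u ∈ Λ ∧ v ∈ Λ ∧ η u = true ∧ η v = true ∧ adj u v) x y}

/-- `κ_Λ(η)`: number of connected components of `1`'s of `η` in `Λ` not meeting the
inner boundary of `Λ`. -/
noncomputable def kappa (Λ : Finset (Site d)) (η : Site d → Bool) : ℕ :=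
  Set.ncard {C : Set (Site d) | ∃ x ∈ Λ, η x = true ∧ C = clusterIn Λ η x ∧
    ∀ z ∈ C, z ∉ innerBdry Λ}

/-- The (unnormalized) wired site random-cluster weight. -/
noncomputable def psiWeight (p q : ℝ) (Λ : Finset (Site d)) (η : Site d → Bool) : ℝ :=
  (p / (1 - p)) ^ (Λ.filter fun x => η x = true).card * q ^ kappa Λ η

/-- Extend a `{0,1}`-configuration on `Λ` by `0` outside. -/
def patchB (Λ : Finset (Site d)) (η : {x // x ∈ Λ} → Bool) : Site d → Bool :=
  fun x => if h : x ∈ Λ then η ⟨x, h⟩ else false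

/-- Conditional probability of an event under the wired site random-cluster measure
`ψ^{(1)}_{p,q,Λ}`, given the values `τ` on `Δ`. -/
noncomputable def psiCond (p q : ℝ) (Λ : Finset (Site d))
    (Ev : (Site d → Bool) → Prop) (Δ : Finset (Site d)) (τ : Site d → Bool) : ℝ :=
  (∑ η : {x // x ∈ Λ} → Bool,
      if Ev (patchB Λ η) ∧ ∀ x ∈ Δ, patchB Λ η x = τ x
      then psiWeight p q Λ (patchB Λ η) else 0) /
    ∑ η : {x // x ∈ Λ} → Bool,
      if ∀ x ∈ Δ, patchB Λ η x = τ x then psiWeight p q Λ (patchB Λ η) else 0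

end SiteRC


section Models

/-- Potts constraints: none. -/
def pottsE (q : ℕ) : Fin 2 → Set (Fin q × Fin q) := fun _ => ∅

/-- Potts single-site interaction: zero. -/
def pottsPhi0 (q : ℕ) : Fin q → ℝ := fun _ => 0

/-- Potts bond interaction: `-β` on agreeing endpoints, `0` otherwise. -/
noncomputable def pottsPhi1 (q : ℕ) (β : ℝ) : Fin 2 → Fin q → Fin q → ℝ :=
  fun _ a b => if a = b then -β else 0

/-- The distinguished Potts colour `q`. -/
def qcol (q : ℕ) (hq : 0 < q) : Fin q := ⟨q - 1, by omega⟩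

/-- The monochromatic Potts point `ω_q`. -/
def omegaPotts (q : ℕ) (hq : 0 < q) : Site 2 → Fin q := fun _ => qcol q hq

/-- Widom-Rowlinson constraints: adjacent distinct nonzero symbols are forbidden. -/
def wrE (q : ℕ) : Fin 2 → Set (Fin (q + 1) × Fin (q + 1)) :=
  fun _ => {ab | ab.1 ≠ 0 ∧ ab.2 ≠ 0 ∧ ab.1 ≠ ab.2}

/-- Widom-Rowlinson single-site interaction: `-log λ` on particles. -/
noncomputable def wrPhi0 (q : ℕ) (lam : ℝ) : Fin (q + 1) → ℝ :=
  fun a => if a = 0 then 0 else -Real.log lam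

/-- Widom-Rowlinson bond interaction: zero. -/
def wrPhi1 (q : ℕ) : Fin 2 → Fin (q + 1) → Fin (q + 1) → ℝ := fun _ _ _ => 0

/-- The monochromatic Widom-Rowlinson point `ω_q`. -/
def omegaWR (q : ℕ) : Site 2 → Fin (q + 1) := fun _ => Fin.last q

/-- Hard-core constraints: adjacent `1`'s are forbidden. -/
def hcE : Fin 2 → Set (Bool × Bool) := fun _ => {(true, true)}

/-- Hard-core single-site interaction: `-log γ` on particles. -/
noncomputable def hcPhi0 (γ : ℝ) : Bool → ℝ := fun b => if b then -Real.log γ else 0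

/-- Hard-core bond interaction: zero. -/
def hcPhi1 : Fin 2 → Bool → Bool → ℝ := fun _ _ _ => 0

/-- The odd checkerboard point `ω^{(o)}`. -/
def omegaOdd : Site 2 → Bool := fun x => decide (Odd (x 0 + x 1))

end Models

section Paths

variable {d : ℕ}

/-- `ConnectedSet S` unfolds to `∀ x ∈ S, ∀ y ∈ S, PathIn S x y`. -/
def PathIn (S : Set (Site d)) : Site d → Site d → Prop :=
  Relation.ReflTransGen fun u v => u ∈ S ∧ v ∈ S ∧ adj u v

theorem adj_comm {x y : Site d} : adj x y ↔ adj y x := by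
  simp only [adj, ← Int.natAbs_neg (x _ - y _), neg_sub]

theorem adj_add_iff {x e : Site d} : adj x (x + e) ↔ ∑ i, (e i).natAbs = 1 := by
  simp [adj]

theorem PathIn.trans {S : Set (Site d)} {x y z : Site d} (hxy : PathIn S x y)
    (hyz : PathIn S y z) : PathIn S x z :=
  Relation.ReflTransGen.trans hxy hyz

theorem PathIn.symm {S : Set (Site d)} {x y : Site d} (h : PathIn S x y) : PathIn S y x := by
  induction h with
  | refl => exact .refl
  | tail _ step ih => exact Relation.ReflTransGen.head ⟨step.2.1, step.1, adj_comm.1 step.2.2⟩ ih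

theorem PathIn.mono {S T : Set (Site d)} (hST : S ⊆ T) {x y : Site d} (h : PathIn S x y) :
    PathIn T x y := by
  induction h with
  | refl => exact .refl
  | tail _ step ih => exact Relation.ReflTransGen.tail ih ⟨hST step.1, hST step.2.1, step.2.2⟩

theorem pathIn_add_of_sum_natAbs_le_one {S : Set (Site d)} {x e : Site d} (hx : x ∈ S)
    (hxe : x + e ∈ S) (he : ∑ i, (e i).natAbs ≤ 1) : PathIn S x (x + e) := by
  rcases Nat.le_one_iff_eq_zero_or_eq_one.1 he with h0 | h1
  · have : e = 0 := funext fun i => Int.natAbs_eq_zero.1 <|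
      Finset.sum_eq_zero_iff.1 h0 i (Finset.mem_univ i)
    rw [this, add_zero]
    exact .refl
  · exact .single ⟨hx, hxe, adj_add_iff.2 h1⟩

theorem ConnectedSet.union_of_adj {S T : Set (Site d)} (hS : ConnectedSet S)
    (hT : ConnectedSet T) {x y : Site d} (hx : x ∈ S) (hy : y ∈ T) (hxy : adj x y) :
    ConnectedSet (S ∪ T) := by
  have to_x : ∀ a ∈ S ∪ T, PathIn (S ∪ T) a x := by
    rintro a (ha | ha)
    · exact PathIn.mono Set.subset_union_left (hS a ha x hx)
    · have hyx : PathIn (S ∪ T) y x := .single ⟨.inr hy, .inl hx, adj_comm.1 hxy⟩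
      exact (PathIn.mono Set.subset_union_right (hT a ha y hy)).trans hyx
  exact fun a ha b hb => (to_x a ha).trans (to_x b hb).symm

theorem subset_starClosureF (Θ : Finset (Site d)) : Θ ⊆ starClosureF Θ :=
  Finset.subset_union_left

theorem mem_starClosureF_add {Θ : Finset (Site d)} {x e : Site d} (hx : x ∈ Θ)
    (he : ∀ i, (e i).natAbs ≤ 1) : x + e ∈ starClosureF Θ := by
  by_cases h0 : e = 0
  · rw [h0, add_zero]
    exact subset_starClosureF Θ hx
  refine Finset.mem_union_right _ (Finset.mem_biUnion.2 ⟨x, hx, Finset.mem_image.2 ⟨e, ?_, rfl⟩⟩)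
  refine Finset.mem_erase.2 ⟨h0, Finset.mem_Icc.2 ⟨fun i => ?_, fun i => ?_⟩⟩ <;>
    dsimp only <;> have := he i <;> omega

theorem exists_add_of_mem_starClosureF {Θ : Finset (Site d)} {a : Site d}
    (ha : a ∈ starClosureF Θ) : ∃ x ∈ Θ, ∃ e : Site d, (∀ i, (e i).natAbs ≤ 1) ∧ a = x + e := by
  rcases Finset.mem_union.1 ha with ha | ha
  · exact ⟨a, ha, 0, by simp, by simp⟩
  obtain ⟨x, hx, hax⟩ := Finset.mem_biUnion.1 ha
  obtain ⟨e, he, rfl⟩ := Finset.mem_image.1 hax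
  obtain ⟨hlo, hhi⟩ := Finset.mem_Icc.1 (Finset.mem_erase.1 he).2
  exact ⟨x, hx, e, fun i => by have := hlo i; have := hhi i; dsimp only at *; omega, rfl⟩

end Paths

theorem pathIn_starClosureF_add {Θ : Finset (Site 2)} {x e : Site 2} (hx : x ∈ Θ)
    (he : ∀ i, (e i).natAbs ≤ 1) : PathIn (starClosureF Θ) x (x + e) := by
  set h : Site 2 := ![e 0, 0]
  have hmid : x + h ∈ starClosureF Θ :=
    mem_starClosureF_add hx fun i => by fin_cases i <;> simp [h, he 0]
  have hsplit : x + e = x + h + ![0, e 1] := by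
    funext i; fin_cases i <;> simp [h, Matrix.vecHead, Matrix.vecTail]
  have horizontal : PathIn (starClosureF Θ) x (x + h) :=
    pathIn_add_of_sum_natAbs_le_one (subset_starClosureF Θ hx) hmid
      (by simpa [Fin.sum_univ_two, h] using he 0)
  have vertical : PathIn (starClosureF Θ) (x + h) (x + h + ![0, e 1]) :=
    pathIn_add_of_sum_natAbs_le_one hmid (hsplit ▸ mem_starClosureF_add hx he)
      (by simpa [Fin.sum_univ_two] using he 1)
  rw [hsplit]
  exact horizontal.trans vertical

theorem StarConnectedSet.connectedSet_starClosureF {Θ : Finset (Site 2)}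
    (hΘ : StarConnectedSet (Θ : Set (Site 2))) : ConnectedSet (starClosureF Θ : Set (Site 2)) := by
  have star_step : ∀ x y, x ∈ Θ → y ∈ Θ → starAdj x y → PathIn (starClosureF Θ) x y :=
    fun x y hx _ hxy => by
      simpa using pathIn_starClosureF_add (e := y - x) hx fun i => by
        have := hxy.2 i; simp only [Pi.sub_apply]; omega
  have core : ∀ x ∈ Θ, ∀ y ∈ Θ, PathIn (starClosureF Θ) x y := fun x hx y hy => by
    have hxy := hΘ x hx y hy
    clear hy
    induction hxy with
    | refl => exact .refl
    | tail _ hst ih => exact ih.trans (star_step _ _ hst.1 hst.2.1 hst.2.2)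
  intro a ha b hb
  obtain ⟨x, hx, e, he, rfl⟩ := exists_add_of_mem_starClosureF ha
  obtain ⟨y, hy, f, hf, rfl⟩ := exists_add_of_mem_starClosureF hb
  exact (pathIn_starClosureF_add hx he).symm.trans
    ((core x hx y hy).trans (pathIn_starClosureF_add hy hf))

theorem complement_union_star_closure_connected_general
    (Θ Λ : Finset (Site 2))
    (hΛc : ConnectedSet ((↑Λ)ᶜ : Set (Site 2)))
    (hΘ : StarConnectedSet (↑Θ : Set (Site 2)))
    (hmeet : ∃ x ∈ starClosureF Θ, x ∈ innerBdry Λ) :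
    ConnectedSet (((Λ : Set (Site 2))ᶜ) ∪ (starClosureF Θ : Set (Site 2))) := by
  obtain ⟨x, hxΘ, hxΛ⟩ := hmeet
  obtain ⟨y, hxy, hyΛ⟩ := (Finset.mem_filter.1 hxΛ).2
  exact hΛc.union_of_adj hΘ.connectedSet_starClosureF (Finset.mem_coe.not.2 hyΛ)
    (Finset.mem_coe.2 hxΘ) (adj_comm.1 hxy)

/-- Remark 5.6: if `Λᶜ` is connected, `Θ` is `⋆`-connected and
`Θ̄⋆` meets the inner boundary of `Λ`, then `Λᶜ ∪ Θ̄⋆` is connected. -/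
theorem complement_union_star_closure_connected
    (Θ Λ : Finset (Site 2)) (hne : Θ.Nonempty) (hsub : Θ ⊆ Λ)
    (hΛc : ConnectedSet ((↑Λ)ᶜ : Set (Site 2)))
    (hΘ : StarConnectedSet (↑Θ : Set (Site 2)))
    (hmeet : ∃ x ∈ starClosureF Θ, x ∈ innerBdry Λ) :
    ConnectedSet (((Λ : Set (Site 2))ᶜ) ∪ (starClosureF Θ : Set (Site 2))) :=
  complement_union_star_closure_connected_general Θ Λ hΛc hΘ hmeet
end Paper
end

section
/- Let π be a Gibbs specification for a nearest-neighbour interaction Φ and constraints ℰ on ℤ^d that satisfies exponential strong spatial mixing with constants C, α > 0 (for all finite sets). Then for all n ∈ ℕ, all y,z ≥ (n,…,n) coordinatewise, all a ∈ 𝒜, and all ω₁, ω₂ ∈ Ω(ℰ) with ω₁(𝒫) = ω₂(𝒫), one has |π^{ω₁}_{S_n}(θ(0) = a) − π^{ω₂}_{S_{y,z}}(θ(0) = a)| ≤ C e^{−αn}. -/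
open scoped Classical
open Filter MeasureTheory

namespace Paper

/-!
Conditioning `π^{ω₂}_{S_{y,z}}` on the configuration outside `S_n ⊆ S_{y,z}` writes it as an
average of `π^σ_{S_n}` over points `σ ∈ Ω(ℰ)` that agree with `ω₂` outside `S_{y,z}`, hence with
`ω₁` on the past. Such a `σ` differs from `ω₁` on `∂S_n` only at sites that are neither in the past
nor in `S_n`, i.e. outside `B_n`, at distance at least `n` from the origin. Strong spatial mixing
with `Θ = {0}` therefore bounds each `|π^{ω₁}_{S_n} - π^σ_{S_n}|`, and with it the average, by
`C e^{-αn}`.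
-/

section Closure

variable {d : ℕ} {Λ Δ : Finset (Site d)}

lemma subset_closureF : Λ ⊆ closureF Λ :=
  Finset.subset_union_left

lemma add_mem_closureF {x : Site d} (hx : x ∈ Λ) (i : Fin d) : x + ee d i ∈ closureF Λ :=
  Finset.mem_union_right _ <| Finset.mem_biUnion.2
    ⟨i, Finset.mem_univ _, Finset.mem_union_left _ (Finset.mem_image_of_mem _ hx)⟩

lemma mem_closureF_of_add_mem {x : Site d} {i : Fin d} (hx : x + ee d i ∈ Λ) :
    x ∈ closureF Λ :=
  Finset.mem_union_right _ <| Finset.mem_biUnion.2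
    ⟨i, Finset.mem_univ _,
      Finset.mem_union_right _ (Finset.mem_image.2 ⟨_, hx, add_sub_cancel_right _ _⟩)⟩

lemma closureF_mono (h : Λ ⊆ Δ) : closureF Λ ⊆ closureF Δ := by
  unfold closureF
  refine Finset.union_subset_union h (Finset.biUnion_mono fun i _ => ?_)
  gcongr

end Closure

section Specification

variable {d : ℕ} {A : Type} {E : Fin d → Set (A × A)} {Φ₀ : A → ℝ} {Φ₁ : Fin d → A → A → ℝ}

lemma FeasibleOn.mono {S T : Set (Site d)} {σ : Site d → A} (h : FeasibleOn E S σ)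
    (hTS : T ⊆ S) : FeasibleOn E T σ :=
  fun x hx i hxi => h x (hTS hx) i (hTS hxi)

lemma feasibleOn_congr {S : Set (Site d)} {σ σ' : Site d → A} (h : ∀ x ∈ S, σ x = σ' x) :
    FeasibleOn E S σ ↔ FeasibleOn E S σ' := by
  refine forall₂_congr fun x hx => forall_congr' fun i => imp_congr_right fun hxi => ?_
  rw [h x hx, h _ hxi]

lemma energy_congr {S : Finset (Site d)} {σ σ' : Site d → A} (h : ∀ x ∈ S, σ x = σ' x) :
    energy Φ₀ Φ₁ S σ = energy Φ₀ Φ₁ S σ' := by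
  unfold energy
  congr 1
  · exact Finset.sum_congr rfl fun x hx => by rw [h x hx]
  · refine Finset.sum_congr rfl fun i _ => Finset.sum_congr rfl fun x hx => ?_
    rw [Finset.mem_filter] at hx
    rw [h x hx.1, h _ hx.2]

lemma patch_of_notMem {Λ : Finset (Site d)} (θ : {x // x ∈ Λ} → A) (ω : Site d → A)
    {x : Site d} (hx : x ∉ Λ) : patch Λ θ ω x = ω x :=
  dif_neg hx

lemma patch_restrict_self (Λ : Finset (Site d)) (ω : Site d → A) :
    patch Λ (fun x => ω x) ω = ω := by
  funext x
  unfold patch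
  split <;> rfl

lemma patch_congr_right {Λ : Finset (Site d)} {ω ω' : Site d → A}
    (h : ∀ x ∉ Λ, ω x = ω' x) (θ : {x // x ∈ Λ} → A) : patch Λ θ ω = patch Λ θ ω' := by
  funext x
  unfold patch
  split
  · rfl
  · exact h x ‹_›

lemma patch_mem_omega {Λ : Finset (Site d)} {ω : Site d → A} {θ : {x // x ∈ Λ} → A}
    (hω : ω ∈ Omega E) (hfeas : FeasibleOn E (closureF Λ) (patch Λ θ ω)) :
    patch Λ θ ω ∈ Omega E := by
  intro x _ i _
  by_cases hx : x ∈ Λ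
  · exact hfeas x (subset_closureF hx) i (add_mem_closureF hx i)
  by_cases hxi : x + ee d i ∈ Λ
  · exact hfeas x (mem_closureF_of_add_mem hxi) i (subset_closureF hxi)
  rw [patch_of_notMem θ ω hx, patch_of_notMem θ ω hxi]
  exact hω x trivial i trivial

lemma bWeight_nonneg (Λ : Finset (Site d)) (ω : Site d → A) (θ : {x // x ∈ Λ} → A) :
    0 ≤ bWeight E Φ₀ Φ₁ Λ ω θ := by
  unfold bWeight
  split <;> positivity

lemma patch_mem_omega_of_bWeight_pos {Λ : Finset (Site d)} {ω : Site d → A}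
    {θ : {x // x ∈ Λ} → A} (hω : ω ∈ Omega E) (hθ : 0 < bWeight E Φ₀ Φ₁ Λ ω θ) :
    patch Λ θ ω ∈ Omega E := by
  unfold bWeight at hθ
  split at hθ
  · exact patch_mem_omega hω ‹_›
  · exact absurd hθ (lt_irrefl 0)

lemma bWeight_congr_bdry {Λ : Finset (Site d)} {ω ω' : Site d → A}
    (h : ∀ x ∈ bdry Λ, ω x = ω' x) (θ : {x // x ∈ Λ} → A) :
    bWeight E Φ₀ Φ₁ Λ ω θ = bWeight E Φ₀ Φ₁ Λ ω' θ := by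
  have hpatch : ∀ x ∈ closureF Λ, patch Λ θ ω x = patch Λ θ ω' x := by
    intro x hx
    unfold patch
    split
    · rfl
    · exact h x (Finset.mem_sdiff.2 ⟨hx, ‹_›⟩)
  unfold bWeight
  rw [feasibleOn_congr hpatch, energy_congr hpatch]

variable [Fintype A]

lemma sum_bWeight_pos (Λ : Finset (Site d)) {ω : Site d → A} (hω : ω ∈ Omega E) :
    0 < ∑ θ : {x // x ∈ Λ} → A, bWeight E Φ₀ Φ₁ Λ ω θ := by
  refine Finset.sum_pos' (fun θ _ => bWeight_nonneg Λ ω θ) ⟨fun x => ω x, Finset.mem_univ _, ?_⟩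
  rw [bWeight, patch_restrict_self, if_pos (hω.mono (Set.subset_univ _))]
  positivity

lemma piProb_congr_right {Λ : Finset (Site d)} {ω ω' : Site d → A}
    (h : ∀ x ∉ Λ, ω x = ω' x) (Ev : (Site d → A) → Prop) :
    piProb E Φ₀ Φ₁ Λ ω Ev = piProb E Φ₀ Φ₁ Λ ω' Ev := by
  unfold piProb bWeight
  simp only [patch_congr_right h]

lemma piProb_congr_bdry {Λ : Finset (Site d)} {ω ω' : Site d → A}
    (h : ∀ x ∈ bdry Λ, ω x = ω' x) {Ev : (Site d → A) → Prop}
    (hEv : ∀ θ : {x // x ∈ Λ} → A, Ev (patch Λ θ ω) ↔ Ev (patch Λ θ ω')) :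
    piProb E Φ₀ Φ₁ Λ ω Ev = piProb E Φ₀ Φ₁ Λ ω' Ev := by
  unfold piProb
  congr 1
  · exact Finset.sum_congr rfl fun θ _ => if_congr (hEv θ) (bWeight_congr_bdry h θ) rfl
  · exact Finset.sum_congr rfl fun θ _ => bWeight_congr_bdry h θ

-- Multiplied out, this also covers a vanishing partition function, where `piProb` is `x / 0 = 0`.
lemma sum_bWeight_mul_piProb (Λ : Finset (Site d)) (ω : Site d → A) (Ev : (Site d → A) → Prop) :
    (∑ θ : {x // x ∈ Λ} → A, bWeight E Φ₀ Φ₁ Λ ω θ) * piProb E Φ₀ Φ₁ Λ ω Ev =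
      ∑ θ : {x // x ∈ Λ} → A, if Ev (patch Λ θ ω) then bWeight E Φ₀ Φ₁ Λ ω θ else 0 := by
  unfold piProb
  by_cases hZ : ∑ θ : {x // x ∈ Λ} → A, bWeight E Φ₀ Φ₁ Λ ω θ = 0
  · have hzero := (Finset.sum_eq_zero_iff_of_nonneg fun θ _ => bWeight_nonneg Λ ω θ).1 hZ
    rw [hZ, zero_mul]
    exact (Finset.sum_eq_zero fun θ hθ => by rw [hzero θ hθ, ite_self]).symm
  · exact mul_div_cancel₀ _ hZ

end Specification

section Factorization

variable {d : ℕ} {A : Type} {E : Fin d → Set (A × A)} {Φ₀ : A → ℝ} {Φ₁ : Fin d → A → A → ℝ}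
  {Λ Δ : Finset (Site d)}

def glue (θ₁ : {x // x ∈ Λ} → A) (θ₂ : {x // x ∈ Δ \ Λ} → A) :
    {x // x ∈ Δ} → A :=
  fun x => if h : (x : Site d) ∈ Λ then θ₁ ⟨x, h⟩ else θ₂ ⟨x, Finset.mem_sdiff.2 ⟨x.2, h⟩⟩

def glueEquiv (hsub : Λ ⊆ Δ) :
    (({x // x ∈ Δ \ Λ} → A) × ({x // x ∈ Λ} → A)) ≃ ({x // x ∈ Δ} → A) where
  toFun p := glue p.2 p.1
  invFun θ := (fun x => θ ⟨x, (Finset.mem_sdiff.1 x.2).1⟩, fun x => θ ⟨x, hsub x.2⟩)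
  left_inv p := by
    ext x
    · simp only [glue, dif_neg (Finset.mem_sdiff.1 x.2).2]
    · simp only [glue, dif_pos x.2]
  right_inv θ := by
    funext x
    by_cases h : (x : Site d) ∈ Λ <;> simp only [glue, h, dite_true, dite_false]

lemma sum_glue [Fintype A] (hsub : Λ ⊆ Δ) (f : ({x // x ∈ Δ} → A) → ℝ) :
    ∑ θ : {x // x ∈ Δ} → A, f θ =
      ∑ θ₂ : {x // x ∈ Δ \ Λ} → A, ∑ θ₁ : {x // x ∈ Λ} → A, f (glue θ₁ θ₂) := by
  rw [← Fintype.sum_prod_type', ← (glueEquiv hsub).sum_comp]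
  rfl

lemma patch_glue (hsub : Λ ⊆ Δ) (ω : Site d → A) (θ₁ : {x // x ∈ Λ} → A)
    (θ₂ : {x // x ∈ Δ \ Λ} → A) :
    patch Δ (glue θ₁ θ₂) ω = patch Λ θ₁ (patch (Δ \ Λ) θ₂ ω) := by
  funext x
  by_cases hΛ : x ∈ Λ
  · simp only [patch, glue, dif_pos (hsub hΛ), dif_pos hΛ]
  by_cases hΔ : x ∈ Δ
  · simp only [patch, glue, dif_pos hΔ, dif_neg hΛ, dif_pos (Finset.mem_sdiff.2 ⟨hΔ, hΛ⟩)]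
  · simp only [patch, dif_neg hΛ, Finset.mem_sdiff, hΔ, false_and, dite_false]

noncomputable def restEnergy (Φ₀ : A → ℝ) (Φ₁ : Fin d → A → A → ℝ) (T S : Finset (Site d))
    (σ : Site d → A) : ℝ :=
  (∑ x ∈ S \ T, Φ₀ (σ x)) +
    ∑ i : Fin d, ∑ x ∈ S.filter (fun x => x + ee d i ∈ S) \ T.filter (fun x => x + ee d i ∈ T),
      Φ₁ i (σ x) (σ (x + ee d i))

lemma energy_eq_add_restEnergy {T S : Finset (Site d)} (hTS : T ⊆ S) (σ : Site d → A) :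
    energy Φ₀ Φ₁ S σ = energy Φ₀ Φ₁ T σ + restEnergy Φ₀ Φ₁ T S σ := by
  have hbonds : ∀ i : Fin d,
      T.filter (fun x => x + ee d i ∈ T) ⊆ S.filter (fun x => x + ee d i ∈ S) :=
    fun i x hx => by
      rw [Finset.mem_filter] at hx ⊢
      exact ⟨hTS hx.1, hTS hx.2⟩
  unfold energy restEnergy
  rw [← Finset.sum_sdiff hTS]
  simp only [← Finset.sum_sdiff (hbonds _), Finset.sum_add_distrib]
  ring

lemma restEnergy_closureF_congr {σ σ' : Site d → A} (h : ∀ x ∉ Λ, σ x = σ' x) :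
    restEnergy Φ₀ Φ₁ (closureF Λ) (closureF Δ) σ =
      restEnergy Φ₀ Φ₁ (closureF Λ) (closureF Δ) σ' := by
  unfold restEnergy
  congr 1
  · refine Finset.sum_congr rfl fun x hx => ?_
    rw [h x fun hxΛ => (Finset.mem_sdiff.1 hx).2 (subset_closureF hxΛ)]
  · refine Finset.sum_congr rfl fun i _ => Finset.sum_congr rfl fun x hx => ?_
    have hnot := (Finset.mem_sdiff.1 hx).2
    rw [Finset.mem_filter] at hnot
    rw [h x fun hxΛ => hnot ⟨subset_closureF hxΛ, add_mem_closureF hxΛ i⟩,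
      h _ fun hxΛ => hnot ⟨mem_closureF_of_add_mem hxΛ, subset_closureF hxΛ⟩]

lemma feasibleOn_closureF_iff (hsub : Λ ⊆ Δ) (σ : Site d → A) :
    FeasibleOn E (closureF Δ) σ ↔
      FeasibleOn E (closureF Λ) σ ∧ FeasibleOn E (↑(closureF Δ) \ ↑Λ) σ := by
  refine ⟨fun h => ⟨h.mono (Finset.coe_subset.2 (closureF_mono hsub)), h.mono Set.sdiff_subset⟩,
    fun ⟨hΛ, hout⟩ x hx i hxi => ?_⟩
  by_cases hxΛ : x ∈ Λ
  · exact hΛ x (subset_closureF hxΛ) i (add_mem_closureF hxΛ i)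
  by_cases hxiΛ : x + ee d i ∈ Λ
  · exact hΛ x (mem_closureF_of_add_mem hxiΛ) i (subset_closureF hxiΛ)
  · exact hout x ⟨hx, hxΛ⟩ i ⟨hxi, hxiΛ⟩

noncomputable def outerWeight (E : Fin d → Set (A × A)) (Φ₀ : A → ℝ)
    (Φ₁ : Fin d → A → A → ℝ) (Λ Δ : Finset (Site d)) (τ : Site d → A) : ℝ :=
  if FeasibleOn E (↑(closureF Δ) \ ↑Λ) τ then
    Real.exp (-restEnergy Φ₀ Φ₁ (closureF Λ) (closureF Δ) τ) else 0

lemma bWeight_glue (hsub : Λ ⊆ Δ) (ω : Site d → A) (θ₁ : {x // x ∈ Λ} → A)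
    (θ₂ : {x // x ∈ Δ \ Λ} → A) :
    bWeight E Φ₀ Φ₁ Δ ω (glue θ₁ θ₂) =
      bWeight E Φ₀ Φ₁ Λ (patch (Δ \ Λ) θ₂ ω) θ₁ *
        outerWeight E Φ₀ Φ₁ Λ Δ (patch (Δ \ Λ) θ₂ ω) := by
  set τ := patch (Δ \ Λ) θ₂ ω
  have hoff : ∀ x ∉ Λ, patch Λ θ₁ τ x = τ x := fun x hx => patch_of_notMem θ₁ τ hx
  have hfeas : FeasibleOn E (closureF Δ) (patch Λ θ₁ τ) ↔
      FeasibleOn E (closureF Λ) (patch Λ θ₁ τ) ∧ FeasibleOn E (↑(closureF Δ) \ ↑Λ) τ :=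
    (feasibleOn_closureF_iff hsub _).trans
      (and_congr_right fun _ => feasibleOn_congr fun x hx => hoff x hx.2)
  have henergy : energy Φ₀ Φ₁ (closureF Δ) (patch Λ θ₁ τ) =
      energy Φ₀ Φ₁ (closureF Λ) (patch Λ θ₁ τ) +
        restEnergy Φ₀ Φ₁ (closureF Λ) (closureF Δ) τ := by
    rw [energy_eq_add_restEnergy (closureF_mono hsub), restEnergy_closureF_congr hoff]
  unfold bWeight outerWeight
  rw [patch_glue hsub, hfeas, henergy, neg_add, Real.exp_add]
  by_cases h₁ : FeasibleOn E (closureF Λ) (patch Λ θ₁ τ) <;>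
    by_cases h₂ : FeasibleOn E (↑(closureF Δ) \ ↑Λ) τ <;> simp [h₁, h₂]

end Factorization

lemma abs_sub_div_sum_le {ι : Type*} [Fintype ι] {w f : ι → ℝ} {p ε : ℝ}
    (hw : ∀ i, 0 ≤ w i) (hpos : 0 < ∑ i, w i) (hf : ∀ i, 0 < w i → |p - f i| ≤ ε) :
    |p - (∑ i, w i * f i) / ∑ i, w i| ≤ ε := by
  have hdiff : p - (∑ i, w i * f i) / ∑ i, w i = (∑ i, w i * (p - f i)) / ∑ i, w i := by
    simp only [mul_sub, Finset.sum_sub_distrib, ← Finset.sum_mul]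
    field_simp
  have hterm : ∀ i, |w i * (p - f i)| ≤ w i * ε := fun i => by
    rcases (hw i).eq_or_lt with h | h
    · simp [← h]
    · rw [abs_mul, abs_of_pos h]
      exact mul_le_mul_of_nonneg_left (hf i h) h.le
  rw [hdiff, abs_div, abs_of_pos hpos, div_le_iff₀ hpos, mul_comm, Finset.sum_mul]
  exact (Finset.abs_sum_le_sum_abs _ _).trans (Finset.sum_le_sum fun i _ => hterm i)

section Consistency

variable {d : ℕ} {A : Type} [Fintype A] {E : Fin d → Set (A × A)} {Φ₀ : A → ℝ}
  {Φ₁ : Fin d → A → A → ℝ} {Λ Δ : Finset (Site d)}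

/-- Consistency of the specification: `π_Δ = π_Δ π_Λ` for `Λ ⊆ Δ`. -/
theorem piProb_eq_sum_bWeight_mul_piProb (hsub : Λ ⊆ Δ) (ω : Site d → A)
    (Ev : (Site d → A) → Prop) :
    piProb E Φ₀ Φ₁ Δ ω Ev =
      (∑ θ : {x // x ∈ Δ} → A, bWeight E Φ₀ Φ₁ Δ ω θ * piProb E Φ₀ Φ₁ Λ (patch Δ θ ω) Ev) /
        ∑ θ : {x // x ∈ Δ} → A, bWeight E Φ₀ Φ₁ Δ ω θ := by
  rw [piProb]
  congr 1
  rw [sum_glue hsub, sum_glue hsub]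
  refine Finset.sum_congr rfl fun θ₂ _ => ?_
  set τ := patch (Δ \ Λ) θ₂ ω
  set g := outerWeight E Φ₀ Φ₁ Λ Δ τ
  calc _ = g * ∑ θ₁ : {x // x ∈ Λ} → A,
        if Ev (patch Λ θ₁ τ) then bWeight E Φ₀ Φ₁ Λ τ θ₁ else 0 := by
        rw [Finset.mul_sum]
        refine Finset.sum_congr rfl fun θ₁ _ => ?_
        rw [bWeight_glue hsub, patch_glue hsub, mul_ite, mul_zero, mul_comm]
    _ = g * ((∑ θ₁ : {x // x ∈ Λ} → A, bWeight E Φ₀ Φ₁ Λ τ θ₁) * piProb E Φ₀ Φ₁ Λ τ Ev) := by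
        rw [sum_bWeight_mul_piProb]
    _ = _ := by
        rw [Finset.sum_mul, Finset.mul_sum]
        refine Finset.sum_congr rfl fun θ₁ _ => ?_
        rw [bWeight_glue hsub, patch_glue hsub,
          piProb_congr_right (fun x hx => patch_of_notMem θ₁ τ hx) Ev]
        ring

theorem abs_sub_piProb_le_of_forall_sub_piProb_le (hsub : Λ ⊆ Δ) {ω : Site d → A}
    (hω : ω ∈ Omega E) {Ev : (Site d → A) → Prop} {p ε : ℝ}
    (h : ∀ σ ∈ Omega E, (∀ x ∉ Δ, σ x = ω x) → |p - piProb E Φ₀ Φ₁ Λ σ Ev| ≤ ε) :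
    |p - piProb E Φ₀ Φ₁ Δ ω Ev| ≤ ε := by
  rw [piProb_eq_sum_bWeight_mul_piProb hsub]
  exact abs_sub_div_sum_le (fun θ => bWeight_nonneg Δ ω θ) (sum_bWeight_pos Δ hω) fun θ hθ =>
    h _ (patch_mem_omega_of_bWeight_pos hω hθ) fun x hx => patch_of_notMem θ ω hx

end Consistency

section Geometry

variable {d : ℕ}

lemma zero_mem_SF (d n : ℕ) : (0 : Site d) ∈ SF d n :=
  Finset.mem_filter.2 ⟨Finset.mem_Icc.2 ⟨fun _ => by simp, fun _ => by simp⟩,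
    fun ⟨_, _, hlt⟩ => lt_irrefl _ hlt⟩

lemma SF_subset_SyzF {n : ℕ} {y z : Site d} (hy : ∀ i, (n : ℤ) ≤ y i)
    (hz : ∀ i, (n : ℤ) ≤ z i) : SF d n ⊆ SyzF y z := by
  intro x hx
  obtain ⟨hbox, hlex⟩ := Finset.mem_filter.1 hx
  obtain ⟨hlo, hhi⟩ := Finset.mem_Icc.1 hbox
  refine Finset.mem_filter.2 ⟨Finset.mem_Icc.2 ⟨fun i => ?_, fun i => ?_⟩, hlex⟩
  · linarith [hy i, hlo i, show (-y) i = -y i from rfl]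
  · linarith [hz i, hhi i]

lemma notMem_SyzF_of_lexLt {x y z : Site d} (hx : lexLt x 0) : x ∉ SyzF y z :=
  fun hmem => (Finset.mem_filter.1 hmem).2 hx

lemma le_dist1_zero_of_notMem_boxF {n : ℕ} {x : Site d} (hx : x ∉ boxF d n) :
    (n : ℝ) ≤ dist1 0 x := by
  obtain ⟨j, hj⟩ : ∃ j, n < (x j).natAbs := by
    by_contra! h
    exact hx (Finset.mem_Icc.2 ⟨fun j => by have := h j; simp only; omega,
      fun j => by have := h j; simp only; omega⟩)
  calc (n : ℝ) ≤ ((0 - x j).natAbs : ℝ) := by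
        rw [zero_sub, Int.natAbs_neg]
        exact_mod_cast hj.le
    _ ≤ dist1 0 x :=
        Finset.single_le_sum (f := fun i => ((0 - x i).natAbs : ℝ)) (fun i _ => by positivity)
          (Finset.mem_univ j)

lemma le_setDist_zero {n : ℕ} {S : Finset (Site d)} (hS : S.Nonempty)
    (h : ∀ x ∈ S, x ∉ boxF d n) : (n : ℝ) ≤ setDist {0} S := by
  obtain ⟨y, hy⟩ := hS
  refine le_csInf ⟨_, 0, Finset.mem_singleton_self 0, y, hy, rfl⟩ ?_
  rintro r ⟨x, hx, y, hy, rfl⟩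
  rw [Finset.mem_singleton.1 hx]
  exact le_dist1_zero_of_notMem_boxF (h y hy)

end Geometry

section StrongSpatialMixing

variable {d : ℕ} {A : Type} [Fintype A] [DecidableEq A]

def ExpStrongSpatialMixing (E : Fin d → Set (A × A)) (Φ₀ : A → ℝ) (Φ₁ : Fin d → A → A → ℝ)
    (C α : ℝ) : Prop :=
  ∀ (Δ Θ : Finset (Site d)), Θ ⊆ Δ → ∀ θ : Site d → A,
    ∀ ω₁ ∈ Omega E, ∀ ω₂ ∈ Omega E,
      |piProb E Φ₀ Φ₁ Δ ω₁ (fun σ => ∀ x ∈ Θ, σ x = θ x) -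
          piProb E Φ₀ Φ₁ Δ ω₂ (fun σ => ∀ x ∈ Θ, σ x = θ x)| ≤
        (Θ.card : ℝ) * C * Real.exp (-α * setDist Θ ((bdry Δ).filter fun x => ω₁ x ≠ ω₂ x))

theorem ExpStrongSpatialMixing.abs_sub_piProb_le {E : Fin d → Set (A × A)} {Φ₀ : A → ℝ}
    {Φ₁ : Fin d → A → A → ℝ} {C α : ℝ} (hssm : ExpStrongSpatialMixing E Φ₀ Φ₁ C α)
    (hC : 0 ≤ C) (hα : 0 ≤ α) {Δ : Finset (Site d)} (h0 : (0 : Site d) ∈ Δ)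
    {ω₁ ω₂ : Site d → A} (hω₁ : ω₁ ∈ Omega E) (hω₂ : ω₂ ∈ Omega E) {n : ℕ}
    (hfar : ∀ x ∈ bdry Δ, ω₁ x ≠ ω₂ x → x ∉ boxF d n) (a : A) :
    |piProb E Φ₀ Φ₁ Δ ω₁ (fun σ => σ 0 = a) - piProb E Φ₀ Φ₁ Δ ω₂ (fun σ => σ 0 = a)| ≤
      C * Real.exp (-α * n) := by
  set D := (bdry Δ).filter fun x => ω₁ x ≠ ω₂ x
  rcases D.eq_empty_or_nonempty with hD | hD
  · have hbdry : ∀ x ∈ bdry Δ, ω₁ x = ω₂ x := fun x hx => by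
      by_contra hne
      exact Finset.notMem_empty x (hD ▸ Finset.mem_filter.2 ⟨hx, hne⟩)
    rw [piProb_congr_bdry hbdry fun θ => by rw [patch, patch, dif_pos h0, dif_pos h0],
      sub_self, abs_zero]
    positivity
  · have hdist : (n : ℝ) ≤ setDist {0} D :=
      le_setDist_zero hD fun x hx => hfar x (Finset.mem_filter.1 hx).1 (Finset.mem_filter.1 hx).2
    have hmix := hssm Δ {0} (Finset.singleton_subset_iff.2 h0) (fun _ => a) ω₁ hω₁ ω₂ hω₂
    simp only [Finset.mem_singleton, forall_eq, Finset.card_singleton, Nat.cast_one,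
      one_mul] at hmix
    refine hmix.trans (mul_le_mul_of_nonneg_left (Real.exp_le_exp.2 ?_) hC)
    nlinarith

end StrongSpatialMixing

theorem ssm_past_boundary_bound_general
    {d : ℕ} {A : Type} [Fintype A] [DecidableEq A]
    (E : Fin d → Set (A × A)) (Φ₀ : A → ℝ) (Φ₁ : Fin d → A → A → ℝ)
    (C α : ℝ) (hC : 0 < C) (hα : 0 < α)
    (hssm : ∀ (Δ Θ : Finset (Site d)), Θ ⊆ Δ → ∀ θ : Site d → A,
      ∀ ω₁ ∈ Omega E, ∀ ω₂ ∈ Omega E,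
        |piProb E Φ₀ Φ₁ Δ ω₁ (fun σ => ∀ x ∈ Θ, σ x = θ x) -
            piProb E Φ₀ Φ₁ Δ ω₂ (fun σ => ∀ x ∈ Θ, σ x = θ x)| ≤
          (Θ.card : ℝ) * C *
            Real.exp (-α * setDist Θ ((bdry Δ).filter fun x => ω₁ x ≠ ω₂ x))) :
    ∀ (n : ℕ) (y z : Site d), (∀ i, (n : ℤ) ≤ y i) → (∀ i, (n : ℤ) ≤ z i) →
      ∀ a : A, ∀ ω₁ ∈ Omega E, ∀ ω₂ ∈ Omega E,
        (∀ x : Site d, lexLt x 0 → ω₁ x = ω₂ x) →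
        |piProb E Φ₀ Φ₁ (SF d n) ω₁ (fun σ => σ 0 = a) -
            piProb E Φ₀ Φ₁ (SyzF y z) ω₂ (fun σ => σ 0 = a)| ≤ C * Real.exp (-α * n) := by
  intro n y z hy hz a ω₁ hω₁ ω₂ hω₂ hpast
  refine abs_sub_piProb_le_of_forall_sub_piProb_le (SF_subset_SyzF hy hz) hω₂
    fun σ hσ hσω₂ => ExpStrongSpatialMixing.abs_sub_piProb_le hssm hC.le hα.le
      (zero_mem_SF d n) hω₁ hσ (fun x hx hne hbox => ?_) a
  have hfuture : ¬lexLt x 0 := fun hlex =>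
    hne ((hpast x hlex).trans (hσω₂ x (notMem_SyzF_of_lexLt hlex)).symm)
  exact (Finset.mem_sdiff.1 hx).2 (Finset.mem_filter.2 ⟨hbox, hfuture⟩)

/-- Proposition 7.4: exponential SSM of a specification implies the
half-plane exponential bound for configurations agreeing on the past. -/
theorem ssm_past_boundary_bound
    {d : ℕ} {A : Type} [Fintype A] [DecidableEq A]
    (E : Fin d → Set (A × A)) (Φ₀ : A → ℝ) (Φ₁ : Fin d → A → A → ℝ)
    (hΩ : (Omega E).Nonempty) (C α : ℝ) (hC : 0 < C) (hα : 0 < α)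
    (hssm : ∀ (Δ Θ : Finset (Site d)), Θ ⊆ Δ → ∀ θ : Site d → A,
      ∀ ω₁ ∈ Omega E, ∀ ω₂ ∈ Omega E,
        |piProb E Φ₀ Φ₁ Δ ω₁ (fun σ => ∀ x ∈ Θ, σ x = θ x) -
            piProb E Φ₀ Φ₁ Δ ω₂ (fun σ => ∀ x ∈ Θ, σ x = θ x)| ≤
          (Θ.card : ℝ) * C *
            Real.exp (-α * setDist Θ ((bdry Δ).filter fun x => ω₁ x ≠ ω₂ x))) :
    ∀ (n : ℕ) (y z : Site d), (∀ i, (n : ℤ) ≤ y i) → (∀ i, (n : ℤ) ≤ z i) →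
      ∀ a : A, ∀ ω₁ ∈ Omega E, ∀ ω₂ ∈ Omega E,
        (∀ x : Site d, lexLt x 0 → ω₁ x = ω₂ x) →
        |piProb E Φ₀ Φ₁ (SF d n) ω₁ (fun σ => σ 0 = a) -
            piProb E Φ₀ Φ₁ (SyzF y z) ω₂ (fun σ => σ 0 = a)| ≤ C * Real.exp (-α * n) :=
  ssm_past_boundary_bound_general E Φ₀ Φ₁ C α hC hα hssm

end Paper
end
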